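/- Let ξ be a parallel unit vector field and n > 2. If the projective semi-symmetric connection satisfies R̃·P̃ = 0 (R̃(X,Y) acting as a derivation on the Weyl projective tensor P̃ of ∇̃), then the Ricci tensor of the Levi-Civita connection vanishes identically: S = 0. -/

import Mathlib

/-- Abstract setup for an `n`-dimensional Riemannian manifold: `C` plays the role of the
ring of smooth functions (an `ℝ`-algebra), `V` the `C`-module of vector fields, `D` the
directional derivative of functions, `bracket` the Lie bracket, `g` the (symmetric) Riemannian
metric, `nabla` the Levi-Civita connection (torsion free and metric compatible), and `xi`
a distinguished unit vector field. -/
structure GeomSetup (n : ℕ) (C : Type*) (V : Type*) [CommRing C] [Algebra ℝ C]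
    [AddCommGroup V] [Module C V] where
  D : V → C → C
  D_add : ∀ X f₁ f₂, D X (f₁ + f₂) = D X f₁ + D X f₂
  D_mul : ∀ X f₁ f₂, D X (f₁ * f₂) = f₁ * D X f₂ + f₂ * D X f₁
  D_addX : ∀ X Y f, D (X + Y) f = D X f + D Y f
  D_smulX : ∀ (f : C) X h, D (f • X) h = f * D X h
  D_const : ∀ X (r : ℝ), D X (algebraMap ℝ C r) = 0
  g : V → V → C
  g_symm : ∀ X Y, g X Y = g Y X
  g_add_left : ∀ X Y Z, g (X + Y) Z = g X Z + g Y Z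
  g_smul_left : ∀ (f : C) X Y, g (f • X) Y = f * g X Y
  nabla : V → V → V
  nabla_add_left : ∀ X Y Z, nabla (X + Y) Z = nabla X Z + nabla Y Z
  nabla_smul_left : ∀ (f : C) X Y, nabla (f • X) Y = f • nabla X Y
  nabla_add_right : ∀ X Y Z, nabla X (Y + Z) = nabla X Y + nabla X Z
  nabla_leibniz : ∀ X (f : C) Y, nabla X (f • Y) = f • nabla X Y + D X f • Y
  bracket : V → V → V
  bracket_eq : ∀ X Y, bracket X Y = nabla X Y - nabla Y X
  compat : ∀ X Y Z, D X (g Y Z) = g (nabla X Y) Z + g Y (nabla X Z)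
  xi : V
  xi_unit : g xi xi = 1

namespace GeomSetup

variable {n : ℕ} {C V : Type*} [CommRing C] [Algebra ℝ C] [AddCommGroup V] [Module C V]

/-- The 1-form `π(X) = g(X, ξ)`. -/
noncomputable def pi1 (s : GeomSetup n C V) (X : V) : C := s.g X s.xi

/-- The 1-form `φ = (1/2) π`. -/
noncomputable def phi (s : GeomSetup n C V) (X : V) : C :=
  algebraMap ℝ C (1 / 2) * s.pi1 X

/-- The 1-form `ψ = ((n-1)/(2(n+1))) π`. -/
noncomputable def psi (s : GeomSetup n C V) (X : V) : C :=
  algebraMap ℝ C (((n : ℝ) - 1) / (2 * ((n : ℝ) + 1))) * s.pi1 X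

/-- The projective semi-symmetric connection
`∇̃_X Y = ∇_X Y + ψ(Y)X + ψ(X)Y + φ(Y)X − φ(X)Y`. -/
noncomputable def tnabla (s : GeomSetup n C V) (X Y : V) : V :=
  s.nabla X Y + s.psi Y • X + s.psi X • Y + s.phi Y • X - s.phi X • Y

/-- The curvature tensor of a connection `nb`:
`R(X,Y)Z = nb_X nb_Y Z − nb_Y nb_X Z − nb_[X,Y] Z`. -/
noncomputable def curv (s : GeomSetup n C V) (nb : V → V → V) (X Y Z : V) : V :=
  nb X (nb Y Z) - nb Y (nb X Z) - nb (s.bracket X Y) Z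

/-- The scalar `λ = −n²/(n+1)²` (as an element of `C`). -/
noncomputable def lam (s : GeomSetup n C V) : C :=
  algebraMap ℝ C (-(n : ℝ) ^ 2 / ((n : ℝ) + 1) ^ 2)

/-- The covariant derivative `(nb_X R)(Y,Z)U` of the curvature tensor of `nb`. -/
noncomputable def covDerCurv (s : GeomSetup n C V) (nb : V → V → V) (X Y Z U : V) : V :=
  nb X (s.curv nb Y Z U) - s.curv nb (nb X Y) Z U - s.curv nb Y (nb X Z) U
    - s.curv nb Y Z (nb X U)

/-- The Ricci tensor (trace of `X ↦ R(X,Y)Z`) of the connection `nb`, computed with respect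
to an orthonormal frame `e`. -/
noncomputable def Ric (s : GeomSetup n C V) (e : Fin n → V) (nb : V → V → V) (Y Z : V) : C :=
  ∑ i, s.g (s.curv nb (e i) Y Z) (e i)

/-- The scalar curvature of the connection `nb` with respect to an orthonormal frame `e`. -/
noncomputable def scal (s : GeomSetup n C V) (e : Fin n → V) (nb : V → V → V) : C :=
  ∑ i, s.Ric e nb (e i) (e i)


end GeomSetup

open GeomSetup

section Aux

variable {n : ℕ} {C V : Type*} [CommRing C] [Algebra ℝ C] [AddCommGroup V] [Module C V]
variable (s : GeomSetup n C V)

local notation "ι" => algebraMap ℝ C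

/-! ### Basic linearity lemmas -/

lemma g_zero_left (W : V) : s.g 0 W = 0 := by
  have := s.g_add_left 0 0 W; simpa using this

lemma g_zero_right (W : V) : s.g W 0 = 0 := by
  rw [s.g_symm]; exact g_zero_left s W

lemma g_add_right (X Y Z : V) : s.g X (Y + Z) = s.g X Y + s.g X Z := by
  rw [s.g_symm, s.g_add_left, s.g_symm Y, s.g_symm Z]

lemma g_smul_right (f : C) (X Y : V) : s.g X (f • Y) = f * s.g X Y := by
  rw [s.g_symm, s.g_smul_left, s.g_symm]

lemma g_neg_left (X Y : V) : s.g (-X) Y = - s.g X Y := by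
  have h : s.g (-X) Y = s.g ((-1 : C) • X) Y := by rw [neg_one_smul]
  rw [h, s.g_smul_left]; ring

lemma g_sub_left (X Y Z : V) : s.g (X - Y) Z = s.g X Z - s.g Y Z := by
  rw [sub_eq_add_neg, s.g_add_left, g_neg_left]; ring

lemma g_sub_right (X Y Z : V) : s.g X (Y - Z) = s.g X Y - s.g X Z := by
  rw [s.g_symm, g_sub_left, s.g_symm Y, s.g_symm Z]

lemma g_sum_left {m : ℕ} (F : Fin m → V) (W : V) :
    s.g (∑ i, F i) W = ∑ i, s.g (F i) W := by
  classical
  induction (Finset.univ : Finset (Fin m)) using Finset.induction_on with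
  | empty => simp [g_zero_left]
  | insert a t h ih => simp [Finset.sum_insert h, s.g_add_left, ih]

lemma g_sum_right {m : ℕ} (F : Fin m → V) (W : V) :
    s.g W (∑ i, F i) = ∑ i, s.g W (F i) := by
  rw [s.g_symm, g_sum_left]; simp [s.g_symm]

end Aux

section Aux2

variable {n : ℕ} {C V : Type*} [CommRing C] [Algebra ℝ C] [AddCommGroup V] [Module C V]
variable (s : GeomSetup n C V)

local notation "ι" => algebraMap ℝ C

/-! ### pi1 lemmas -/

lemma pi1_add (X Y : V) : s.pi1 (X + Y) = s.pi1 X + s.pi1 Y := s.g_add_left X Y s.xi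

lemma pi1_smul (f : C) (X : V) : s.pi1 (f • X) = f * s.pi1 X := s.g_smul_left f X s.xi

lemma pi1_zero : s.pi1 0 = 0 := g_zero_left s s.xi

lemma pi1_sub (X Y : V) : s.pi1 (X - Y) = s.pi1 X - s.pi1 Y := g_sub_left s X Y s.xi

lemma pi1_xi : s.pi1 s.xi = 1 := s.xi_unit

lemma pi1_sum {m : ℕ} (F : Fin m → V) : s.pi1 (∑ i, F i) = ∑ i, s.pi1 (F i) :=
  g_sum_left s F s.xi

/-! ### D lemmas -/

lemma D_constmul (X : V) (r : ℝ) (f : C) : s.D X (ι r * f) = ι r * s.D X f := by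
  rw [s.D_mul, s.D_const]; ring

lemma D_neg (X : V) (f : C) : s.D X (-f) = - s.D X f := by
  have h : -f = ι (-1) * f := by simp
  rw [h, D_constmul]; simp

lemma D_sub (X : V) (f h : C) : s.D X (f - h) = s.D X f - s.D X h := by
  rw [sub_eq_add_neg, s.D_add, D_neg]; ring

/-! ### nabla lemmas -/

lemma nabla_zero_right (X : V) : s.nabla X 0 = 0 := by
  have := s.nabla_add_right X 0 0; simpa using this

lemma nabla_zero_left (X : V) : s.nabla 0 X = 0 := by
  have := s.nabla_add_left 0 0 X; simpa using this

lemma nabla_neg_right (X Y : V) : s.nabla X (-Y) = - s.nabla X Y := by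
  have h : -Y = (-1 : C) • Y := by rw [neg_one_smul]
  have h1 : s.D X (1:C) = 0 := by
    have := s.D_const X 1; simpa using this
  rw [h, s.nabla_leibniz, D_neg, h1]
  simp

lemma nabla_sub_right (X Y Z : V) : s.nabla X (Y - Z) = s.nabla X Y - s.nabla X Z := by
  rw [sub_eq_add_neg, s.nabla_add_right, nabla_neg_right]; abel

lemma nabla_neg_left (X Y : V) : s.nabla (-X) Y = - s.nabla X Y := by
  have h : -X = (-1 : C) • X := by rw [neg_one_smul]
  rw [h, s.nabla_smul_left, neg_one_smul]

lemma nabla_sub_left (X Y Z : V) : s.nabla (X - Y) Z = s.nabla X Z - s.nabla Y Z := by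
  rw [sub_eq_add_neg, s.nabla_add_left, nabla_neg_left, sub_eq_add_neg]

lemma nabla_sum_left {m : ℕ} (F : Fin m → V) (Y : V) :
    s.nabla (∑ i, F i) Y = ∑ i, s.nabla (F i) Y := by
  classical
  induction (Finset.univ : Finset (Fin m)) using Finset.induction_on with
  | empty => simp [nabla_zero_left]
  | insert a t h ih => simp [Finset.sum_insert h, s.nabla_add_left, ih]

lemma nabla_constsmul_right (X : V) (r : ℝ) (Y : V) :
    s.nabla X (ι r • Y) = ι r • s.nabla X Y := by
  rw [s.nabla_leibniz, s.D_const]; simp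

end Aux2

section Aux3

variable {n : ℕ} {C V : Type*} [CommRing C] [Algebra ℝ C] [AddCommGroup V] [Module C V]
variable (s : GeomSetup n C V)

local notation "ι" => algebraMap ℝ C

/-! ### tnabla lemmas -/

/-- `∇̃_X Y = ∇_X Y + (P π(Y))•X + (Q π(X))•Y` with `P = n/(n+1)`, `Q = -1/(n+1)`. -/
lemma tnabla_eq (X Y : V) :
    s.tnabla X Y = s.nabla X Y + (ι ((n : ℝ)/((n : ℝ)+1)) * s.pi1 Y) • X
      + (ι (-1/((n : ℝ)+1)) * s.pi1 X) • Y := by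
  simp only [tnabla, psi, phi]
  have hden : ((n : ℝ) + 1) ≠ 0 := by positivity
  have hP : ι ((n : ℝ)/((n : ℝ)+1))
      = ι (((n : ℝ) - 1) / (2 * ((n : ℝ) + 1))) + ι (1/2 : ℝ) := by
    rw [← map_add]; congr 1; field_simp; ring
  have hQ : ι (-1/((n : ℝ)+1))
      = ι (((n : ℝ) - 1) / (2 * ((n : ℝ) + 1))) - ι (1/2 : ℝ) := by
    rw [← map_sub]; congr 1; field_simp; ring
  rw [hP, hQ]
  module

lemma tnabla_add_right (X Y Z : V) : s.tnabla X (Y + Z) = s.tnabla X Y + s.tnabla X Z := by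
  simp only [tnabla, psi, phi, s.nabla_add_right, pi1_add]
  module

lemma tnabla_leibniz (X : V) (f : C) (Y : V) :
    s.tnabla X (f • Y) = f • s.tnabla X Y + s.D X f • Y := by
  simp only [tnabla, psi, phi, s.nabla_leibniz, pi1_smul]
  module

lemma tnabla_zero_right (X : V) : s.tnabla X 0 = 0 := by
  have := tnabla_add_right s X 0 0; simpa using this

lemma tnabla_neg_right (X Y : V) : s.tnabla X (-Y) = - s.tnabla X Y := by
  have h : -Y = (-1 : C) • Y := by rw [neg_one_smul]
  have h1 : s.D X (1:C) = 0 := by have := s.D_const X 1; simpa using this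
  rw [h, tnabla_leibniz, D_neg, h1]; simp

lemma tnabla_sub_right (X Y Z : V) : s.tnabla X (Y - Z) = s.tnabla X Y - s.tnabla X Z := by
  rw [sub_eq_add_neg, tnabla_add_right, tnabla_neg_right]; abel

lemma tnabla_constsmul_right (X : V) (r : ℝ) (Y : V) :
    s.tnabla X (ι r • Y) = ι r • s.tnabla X Y := by
  rw [tnabla_leibniz, s.D_const]; simp

/-! ### parallel 1-form -/

lemma Dpi (hpar : ∀ X : V, s.nabla X s.xi = 0) (X W : V) :
    s.D X (s.pi1 W) = s.pi1 (s.nabla X W) := by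
  rw [pi1, s.compat, hpar, g_zero_right, pi1]; ring

end Aux3

section Aux4

variable {n : ℕ} {C V : Type*} [CommRing C] [Algebra ℝ C] [AddCommGroup V] [Module C V]
variable (s : GeomSetup n C V)

local notation "ι" => algebraMap ℝ C

/-- The key curvature formula: `R̃(X,Y)Z = R(X,Y)Z + (n/(n+1))²(π(Y)π(Z)X − π(X)π(Z)Y)`. -/
lemma curv_tnabla_eq (hpar : ∀ X : V, s.nabla X s.xi = 0) (X Y Z : V) :
    s.curv s.tnabla X Y Z = s.curv s.nabla X Y Z
      + (ι ((n:ℝ)/((n:ℝ)+1))^2 * (s.pi1 Y * s.pi1 Z)) • X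
      - (ι ((n:ℝ)/((n:ℝ)+1))^2 * (s.pi1 X * s.pi1 Z)) • Y := by
  rw [curv, curv, sq]
  simp only [tnabla_eq, s.bracket_eq, s.nabla_add_right, s.nabla_leibniz,
    nabla_sub_left, nabla_sub_right, pi1_add, pi1_smul, pi1_sub,
    D_constmul, Dpi s hpar, s.D_add, D_sub]
  module

end Aux4

section Aux5

variable {n : ℕ} {C V : Type*} [CommRing C] [Algebra ℝ C] [AddCommGroup V] [Module C V]
variable (s : GeomSetup n C V) (e : Fin n → V)

local notation "ι" => algebraMap ℝ C

lemma smul_cancel {r : ℝ} (hr : r ≠ 0) {v w : V} (h : ι r • v = ι r • w) : v = w := by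
  have h2 := congrArg (fun u => ι r⁻¹ • u) h
  simpa [smul_smul, ← map_mul, inv_mul_cancel₀ hr] using h2

lemma mul_cancel'' {r : ℝ} (hr : r ≠ 0) {x y : C} (h : ι r * x = ι r * y) : x = y := by
  have h2 := congrArg (fun u => ι r⁻¹ * u) h
  simpa [← mul_assoc, ← map_mul, inv_mul_cancel₀ hr] using h2

lemma gsum (hspan : ∀ v : V, v = ∑ i, s.g v (e i) • e i) (X W : V) :
    s.g X W = ∑ i, s.g W (e i) * s.g X (e i) := by
  conv_lhs => rw [hspan W]
  rw [g_sum_right]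
  exact Finset.sum_congr rfl fun i _ => by rw [g_smul_right]

lemma sum_pi_g (hspan : ∀ v : V, v = ∑ i, s.g v (e i) • e i) (X : V) :
    ∑ i, s.pi1 (e i) * s.g X (e i) = s.pi1 X := by
  simp only [pi1]
  rw [gsum s e hspan X s.xi]
  exact Finset.sum_congr rfl fun i _ => by rw [s.g_symm (e i) s.xi]

lemma sum_pi_sq (hspan : ∀ v : V, v = ∑ i, s.g v (e i) • e i) :
    ∑ i, s.pi1 (e i) * s.pi1 (e i) = 1 := by
  have h := sum_pi_g s e hspan s.xi
  rw [pi1_xi] at h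
  rw [← h]
  simp only [pi1]
  exact Finset.sum_congr rfl fun i _ => by rw [s.g_symm s.xi (e i)]

lemma sum_diag (horth : ∀ i j, s.g (e i) (e j) = if i = j then 1 else 0) :
    ∑ i, s.g (e i) (e i) = (n : C) := by
  simp [horth]

lemma collapse (horth : ∀ i j, s.g (e i) (e j) = if i = j then 1 else 0)
    (a : Fin n → C) (i : Fin n) : ∑ j, a j * s.g (e i) (e j) = a i := by
  simp [horth, mul_ite, mul_one, mul_zero]

lemma c_inv (hn : 2 < n) : ι (1/((n:ℝ)-1)) * ((n:C) - 1) = 1 := by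
  have h0 : (2:ℝ) < (n:ℝ) := by exact_mod_cast hn
  have h1 : ((n:ℝ) - 1) ≠ 0 := by linarith
  have h2 : ι (1/((n:ℝ)-1)) * ι ((n:ℝ)-1) = 1 := by
    rw [← map_mul]
    rw [show (1/((n:ℝ)-1)) * ((n:ℝ)-1) = 1 by field_simp]
    exact map_one _
  rw [map_sub, map_one, map_natCast] at h2
  exact h2

end Aux5

section Aux6

variable {n : ℕ} {C V : Type*} [CommRing C] [Algebra ℝ C] [AddCommGroup V] [Module C V]
variable (s : GeomSetup n C V) (e : Fin n → V)

local notation "ι" => algebraMap ℝ C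
local notation "𝕃" => (algebraMap ℝ C ((n:ℝ)/((n:ℝ)+1)))^2

lemma curv_nabla_xi3 (hpar : ∀ X : V, s.nabla X s.xi = 0) (X Y : V) :
    s.curv s.nabla X Y s.xi = 0 := by
  rw [curv, hpar, hpar, hpar, nabla_zero_right, nabla_zero_right]
  abel

lemma curv_nabla_diag (A Y : V) : s.curv s.nabla A A Y = 0 := by
  rw [curv, s.bracket_eq, sub_self (s.nabla A A), nabla_zero_left]
  abel

lemma Ric_nabla_xi (hpar : ∀ X : V, s.nabla X s.xi = 0) (U : V) :
    s.Ric e s.nabla U s.xi = 0 := by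
  rw [Ric]
  refine Finset.sum_eq_zero fun i _ => ?_
  rw [curv_nabla_xi3 s hpar, g_zero_left]

lemma Ric_tnabla_eq (hpar : ∀ X : V, s.nabla X s.xi = 0)
    (horth : ∀ i j, s.g (e i) (e j) = if i = j then 1 else 0)
    (hspan : ∀ v : V, v = ∑ i, s.g v (e i) • e i) (U W : V) :
    s.Ric e s.tnabla U W
      = s.Ric e s.nabla U W + ((n:C) - 1) * (𝕃 * (s.pi1 U * s.pi1 W)) := by
  rw [Ric, Ric]
  have h : ∀ i, s.g (s.curv s.tnabla (e i) U W) (e i)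
      = s.g (s.curv s.nabla (e i) U W) (e i)
        + 𝕃 * (s.pi1 U * s.pi1 W) * s.g (e i) (e i)
        - (𝕃 * s.pi1 W) * (s.pi1 (e i) * s.g U (e i)) := by
    intro i
    rw [curv_tnabla_eq s hpar, g_sub_left, s.g_add_left, s.g_smul_left, s.g_smul_left]
    ring
  rw [Finset.sum_congr rfl fun i _ => h i]
  rw [Finset.sum_sub_distrib, Finset.sum_add_distrib, ← Finset.mul_sum, ← Finset.mul_sum,
    sum_diag s e horth, sum_pi_g s e hspan]
  ring

lemma Ric_tnabla_xi (hpar : ∀ X : V, s.nabla X s.xi = 0)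
    (horth : ∀ i j, s.g (e i) (e j) = if i = j then 1 else 0)
    (hspan : ∀ v : V, v = ∑ i, s.g v (e i) • e i) (U : V) :
    s.Ric e s.tnabla U s.xi = ((n:C) - 1) * (𝕃 * s.pi1 U) := by
  rw [Ric_tnabla_eq s e hpar horth hspan, Ric_nabla_xi s e hpar, pi1_xi]
  ring

/-- Step 5: the Weyl projective tensor of `∇̃` vanishes when the last slot is `ξ`. -/
lemma P_xi (hn : 2 < n) (hpar : ∀ X : V, s.nabla X s.xi = 0)
    (horth : ∀ i j, s.g (e i) (e j) = if i = j then 1 else 0)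
    (hspan : ∀ v : V, v = ∑ i, s.g v (e i) • e i) (A B : V) :
    s.curv s.tnabla A B s.xi - ι (1/((n:ℝ)-1)) •
      (s.Ric e s.tnabla B s.xi • A - s.Ric e s.tnabla A s.xi • B) = 0 := by
  rw [curv_tnabla_eq s hpar, curv_nabla_xi3 s hpar, Ric_tnabla_xi s e hpar horth hspan,
    Ric_tnabla_xi s e hpar horth hspan, pi1_xi]
  have hc := c_inv (C := C) hn
  match_scalars
  · linear_combination (-(𝕃 * s.pi1 B)) * hc
  · linear_combination (𝕃 * s.pi1 A) * hc


end Aux6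

section Aux7

variable {n : ℕ} {C V : Type*} [CommRing C] [Algebra ℝ C] [AddCommGroup V] [Module C V]

/-- The "curvature of `D`" acting on functions. -/
noncomputable def Kfun (s : GeomSetup n C V) (Z U : V) (f : C) : C :=
  s.D Z (s.D U f) - s.D U (s.D Z f) - s.D (s.bracket Z U) f

variable (s : GeomSetup n C V) (e : Fin n → V)

local notation "ι" => algebraMap ℝ C

lemma curv_smul3 (nb : V → V → V) (hadd : ∀ X A B, nb X (A + B) = nb X A + nb X B)
    (hleib : ∀ X (f : C) A, nb X (f • A) = f • nb X A + s.D X f • A)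
    (Z U : V) (f : C) (A : V) :
    s.curv nb Z U (f • A) = f • s.curv nb Z U A + Kfun s Z U f • A := by
  simp only [curv, Kfun, hadd, hleib]
  module

lemma curv_nabla_smul3 (Z U : V) (f : C) (A : V) :
    s.curv s.nabla Z U (f • A) = f • s.curv s.nabla Z U A + Kfun s Z U f • A :=
  curv_smul3 s s.nabla s.nabla_add_right s.nabla_leibniz Z U f A

lemma curv_tnabla_smul3 (Z U : V) (f : C) (A : V) :
    s.curv s.tnabla Z U (f • A) = f • s.curv s.tnabla Z U A + Kfun s Z U f • A :=
  curv_smul3 s s.tnabla (tnabla_add_right s) (tnabla_leibniz s) Z U f A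

lemma Kfun_pi (hpar : ∀ X : V, s.nabla X s.xi = 0) (Z U W : V) :
    Kfun s Z U (s.pi1 W) = s.pi1 (s.curv s.nabla Z U W) := by
  simp only [Kfun, Dpi s hpar, curv, pi1_sub]

lemma Kfun_g (Z U A B : V) :
    Kfun s Z U (s.g A B)
      = s.g (s.curv s.nabla Z U A) B + s.g A (s.curv s.nabla Z U B) := by
  simp only [Kfun, s.compat, s.D_add, curv, g_sub_left, g_sub_right, s.g_add_left,
    g_add_right]
  ring

lemma curv_nabla_add1 (X X' Y Z : V) :
    s.curv s.nabla (X + X') Y Z = s.curv s.nabla X Y Z + s.curv s.nabla X' Y Z := by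
  simp only [curv, s.bracket_eq, s.nabla_add_left, s.nabla_add_right, nabla_sub_left]
  abel

lemma curv_nabla_smul1 (f : C) (X Y Z : V) :
    s.curv s.nabla (f • X) Y Z = f • s.curv s.nabla X Y Z := by
  simp only [curv, s.bracket_eq, s.nabla_leibniz, s.nabla_smul_left, s.nabla_add_left,
    nabla_sub_left]
  module

lemma curv_nabla_zero1 (Y Z : V) : s.curv s.nabla 0 Y Z = 0 := by
  have := curv_nabla_add1 s 0 0 Y Z
  simpa using this

lemma curv_nabla_sum1 {m : ℕ} (F : Fin m → V) (Y Z : V) :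
    s.curv s.nabla (∑ i, F i) Y Z = ∑ i, s.curv s.nabla (F i) Y Z := by
  classical
  induction (Finset.univ : Finset (Fin m)) using Finset.induction_on with
  | empty => simp [curv_nabla_zero1]
  | insert a t h ih => simp [Finset.sum_insert h, curv_nabla_add1, ih]

lemma curv_nabla_expand1 (hspan : ∀ v : V, v = ∑ i, s.g v (e i) • e i) (A U Y : V) :
    s.curv s.nabla A U Y = ∑ i, s.g A (e i) • s.curv s.nabla (e i) U Y := by
  conv_lhs => rw [hspan A]
  rw [curv_nabla_sum1]
  exact Finset.sum_congr rfl fun i _ => curv_nabla_smul1 s _ _ _ _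

lemma sum_pi_curv (hspan : ∀ v : V, v = ∑ i, s.g v (e i) • e i) (U Y : V) :
    ∑ i, s.pi1 (e i) * s.pi1 (s.curv s.nabla (e i) U Y)
      = s.pi1 (s.curv s.nabla s.xi U Y) := by
  rw [curv_nabla_expand1 s e hspan s.xi U Y, pi1_sum]
  exact Finset.sum_congr rfl fun i _ => by
    rw [pi1_smul, pi1, s.g_symm s.xi (e i)]

end Aux7

section Aux8

variable {n : ℕ} {C V : Type*} [CommRing C] [Algebra ℝ C] [AddCommGroup V] [Module C V]
variable (s : GeomSetup n C V) (e : Fin n → V)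

local notation "ι" => algebraMap ℝ C

lemma curv_tnabla_zero3 (X Y : V) : s.curv s.tnabla X Y 0 = 0 := by
  rw [curv, tnabla_zero_right, tnabla_zero_right, tnabla_zero_right, tnabla_zero_right]
  abel

lemma curv_tnabla_sub3 (X Y A B : V) :
    s.curv s.tnabla X Y (A - B) = s.curv s.tnabla X Y A - s.curv s.tnabla X Y B := by
  simp only [curv, tnabla_sub_right]
  abel

lemma Kfun_const (Z U : V) (r : ℝ) : Kfun s Z U (ι r) = 0 := by
  have h1 : s.D U (ι r) = 0 := s.D_const U r
  have h2 : s.D Z (ι r) = 0 := s.D_const Z r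
  have h3 : s.D (s.bracket Z U) (ι r) = 0 := s.D_const _ r
  have h4 : s.D Z (0 : C) = 0 := by
    have := s.D_const Z 0; simpa using this
  have h5 : s.D U (0 : C) = 0 := by
    have := s.D_const U 0; simpa using this
  rw [Kfun, h1, h2, h3, h4, h5]
  ring

lemma curv_tnabla_constsmul3 (X Y : V) (r : ℝ) (A : V) :
    s.curv s.tnabla X Y (ι r • A) = ι r • s.curv s.tnabla X Y A := by
  rw [curv_tnabla_smul3, Kfun_const]
  simp

lemma Ric_tnabla_smul3 (U : V) (f : C) (A : V) :
    s.Ric e s.tnabla U (f • A)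
      = f * s.Ric e s.tnabla U A + ∑ i, Kfun s (e i) U f * s.g A (e i) := by
  rw [Ric, Ric, Finset.mul_sum, ← Finset.sum_add_distrib]
  refine Finset.sum_congr rfl fun i _ => ?_
  rw [curv_tnabla_smul3, s.g_add_left, s.g_smul_left, s.g_smul_left]

lemma Ric_tnabla_sub3 (U A B : V) :
    s.Ric e s.tnabla U (A - B) = s.Ric e s.tnabla U A - s.Ric e s.tnabla U B := by
  rw [Ric, Ric, Ric, ← Finset.sum_sub_distrib]
  refine Finset.sum_congr rfl fun i _ => ?_
  rw [curv_tnabla_sub3, g_sub_left]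

lemma Ric_tnabla_constsmul3 (U : V) (r : ℝ) (A : V) :
    s.Ric e s.tnabla U (ι r • A) = ι r * s.Ric e s.tnabla U A := by
  rw [Ric_tnabla_smul3]
  simp [Kfun_const]

lemma Ric_nabla_smul3 (U : V) (f : C) (A : V) :
    s.Ric e s.nabla U (f • A)
      = f * s.Ric e s.nabla U A + ∑ i, Kfun s (e i) U f * s.g A (e i) := by
  rw [Ric, Ric, Finset.mul_sum, ← Finset.sum_add_distrib]
  refine Finset.sum_congr rfl fun i _ => ?_
  rw [curv_nabla_smul3, s.g_add_left, s.g_smul_left, s.g_smul_left]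

end Aux8

section Aux9

variable {n : ℕ} {C V : Type*} [CommRing C] [Algebra ℝ C] [AddCommGroup V] [Module C V]
variable (s : GeomSetup n C V) (e : Fin n → V)

local notation "ι" => algebraMap ℝ C

lemma sum_pi_curv' (hspan : ∀ v : V, v = ∑ i, s.g v (e i) • e i) (U Y : V) :
    ∑ i, s.pi1 (s.curv s.nabla (e i) U Y) * s.g s.xi (e i)
      = s.pi1 (s.curv s.nabla s.xi U Y) := by
  rw [← sum_pi_curv s e hspan U Y]
  refine Finset.sum_congr rfl fun i _ => ?_
  simp only [pi1]
  rw [s.g_symm s.xi (e i), mul_comm]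

/-- Step 6: the main pointwise identity `(★)` obtained from `R̃·P̃ = 0`. -/
lemma star (hn : 2 < n) (hpar : ∀ X : V, s.nabla X s.xi = 0)
    (horth : ∀ i j, s.g (e i) (e j) = if i = j then 1 else 0)
    (hspan : ∀ v : V, v = ∑ i, s.g v (e i) • e i)
    (hRP : ∀ X Y Z U W : V,
      s.curv s.tnabla X Y
          (s.curv s.tnabla Z U W -
            algebraMap ℝ C (1 / ((n : ℝ) - 1)) •
              (s.Ric e s.tnabla U W • Z - s.Ric e s.tnabla Z W • U)) -
        (s.curv s.tnabla (s.curv s.tnabla X Y Z) U W -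
          algebraMap ℝ C (1 / ((n : ℝ) - 1)) •
            (s.Ric e s.tnabla U W • s.curv s.tnabla X Y Z -
              s.Ric e s.tnabla (s.curv s.tnabla X Y Z) W • U)) -
        (s.curv s.tnabla Z (s.curv s.tnabla X Y U) W -
          algebraMap ℝ C (1 / ((n : ℝ) - 1)) •
            (s.Ric e s.tnabla (s.curv s.tnabla X Y U) W • Z -
              s.Ric e s.tnabla Z W • s.curv s.tnabla X Y U)) -
        (s.curv s.tnabla Z U (s.curv s.tnabla X Y W) -
          algebraMap ℝ C (1 / ((n : ℝ) - 1)) •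
            (s.Ric e s.tnabla U (s.curv s.tnabla X Y W) • Z -
              s.Ric e s.tnabla Z (s.curv s.tnabla X Y W) • U)) = 0)
    (Z U Y : V) :
    s.curv s.nabla Z U Y
      = (ι (1/((n:ℝ)-1)) * s.Ric e s.nabla U Y) • Z
        - (ι (1/((n:ℝ)-1)) * s.Ric e s.nabla Z Y) • U
        + s.pi1 (s.curv s.nabla Z U Y) • s.xi
        - (ι (1/((n:ℝ)-1)) * s.pi1 (s.curv s.nabla s.xi U Y)) • Z
        + (ι (1/((n:ℝ)-1)) * s.pi1 (s.curv s.nabla s.xi Z Y)) • U := by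
  have h := hRP s.xi Y Z U s.xi
  rw [P_xi s e hn hpar horth hspan Z U, curv_tnabla_zero3,
    P_xi s e hn hpar horth hspan (s.curv s.tnabla s.xi Y Z) U,
    P_xi s e hn hpar horth hspan Z (s.curv s.tnabla s.xi Y U)] at h
  simp only [zero_sub, sub_zero, neg_eq_zero] at h
  -- `h` now says that the last group `P̃(Z,U)(R̃(ξ,Y)ξ)` vanishes
  have hT : s.curv s.tnabla s.xi Y s.xi
      = ι (((n:ℝ)/((n:ℝ)+1))^2) • (s.pi1 Y • s.xi - Y) := by
    rw [curv_tnabla_eq s hpar, curv_nabla_xi3 s hpar, pi1_xi, map_pow]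
    module
  rw [hT, curv_tnabla_constsmul3, Ric_tnabla_constsmul3, Ric_tnabla_constsmul3] at h
  have hr : (((n:ℝ)/((n:ℝ)+1))^2) ≠ 0 := by
    have h0 : (0:ℝ) < (n:ℝ) := by
      have : 0 < n := by omega
      exact_mod_cast this
    positivity
  have h5 : ι (((n:ℝ)/((n:ℝ)+1))^2) •
      (s.curv s.tnabla Z U (s.pi1 Y • s.xi - Y) -
        ι (1/((n:ℝ)-1)) •
          (s.Ric e s.tnabla U (s.pi1 Y • s.xi - Y) • Z -
            s.Ric e s.tnabla Z (s.pi1 Y • s.xi - Y) • U))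
      = ι (((n:ℝ)/((n:ℝ)+1))^2) • (0 : V) := by
    rw [smul_zero, ← h]
    module
  have h6 := smul_cancel hr h5
  rw [curv_tnabla_sub3, Ric_tnabla_sub3, Ric_tnabla_sub3,
    curv_tnabla_smul3, Ric_tnabla_smul3, Ric_tnabla_smul3] at h6
  simp only [Kfun_pi s hpar] at h6
  rw [sum_pi_curv' s e hspan U Y, sum_pi_curv' s e hspan Z Y] at h6
  simp only [curv_tnabla_eq s hpar, Ric_tnabla_eq s e hpar horth hspan,
    Ric_nabla_xi s e hpar, curv_nabla_xi3 s hpar, pi1_xi] at h6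
  linear_combination (norm := module) -h6

end Aux9

section Aux10

variable {n : ℕ} {C V : Type*} [CommRing C] [Algebra ℝ C] [AddCommGroup V] [Module C V]
variable (s : GeomSetup n C V) (e : Fin n → V)

local notation "ι" => algebraMap ℝ C

/-- Step 7a: the identity (I). -/
lemma starI (hn : 2 < n) (hpar : ∀ X : V, s.nabla X s.xi = 0)
    (horth : ∀ i j, s.g (e i) (e j) = if i = j then 1 else 0)
    (hspan : ∀ v : V, v = ∑ i, s.g v (e i) • e i)
    (hstar : ∀ Z U Y : V, s.curv s.nabla Z U Y
      = (ι (1/((n:ℝ)-1)) * s.Ric e s.nabla U Y) • Z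
        - (ι (1/((n:ℝ)-1)) * s.Ric e s.nabla Z Y) • U
        + s.pi1 (s.curv s.nabla Z U Y) • s.xi
        - (ι (1/((n:ℝ)-1)) * s.pi1 (s.curv s.nabla s.xi U Y)) • Z
        + (ι (1/((n:ℝ)-1)) * s.pi1 (s.curv s.nabla s.xi Z Y)) • U)
    (U Y : V) :
    s.pi1 (s.curv s.nabla s.xi U Y)
      = s.Ric e s.nabla U Y - s.Ric e s.nabla s.xi Y * s.pi1 U := by
  have h := congrArg s.pi1 (hstar s.xi U Y)
  simp only [pi1_add, pi1_sub, pi1_smul, pi1_xi, curv_nabla_diag, pi1_zero] at h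
  have hc := c_inv (C := C) hn
  have h3 : ι (1/((n:ℝ)-1)) * (s.Ric e s.nabla U Y - s.Ric e s.nabla s.xi Y * s.pi1 U
      - s.pi1 (s.curv s.nabla s.xi U Y)) = 0 := by linear_combination -h
  linear_combination (-((n:C)-1)) * h3
    + (s.Ric e s.nabla U Y - s.Ric e s.nabla s.xi Y * s.pi1 U
        - s.pi1 (s.curv s.nabla s.xi U Y)) * hc

/-- Step 7b: the identity (★v). -/
lemma starv (hn : 2 < n) (hpar : ∀ X : V, s.nabla X s.xi = 0)
    (horth : ∀ i j, s.g (e i) (e j) = if i = j then 1 else 0)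
    (hspan : ∀ v : V, v = ∑ i, s.g v (e i) • e i)
    (hstar : ∀ Z U Y : V, s.curv s.nabla Z U Y
      = (ι (1/((n:ℝ)-1)) * s.Ric e s.nabla U Y) • Z
        - (ι (1/((n:ℝ)-1)) * s.Ric e s.nabla Z Y) • U
        + s.pi1 (s.curv s.nabla Z U Y) • s.xi
        - (ι (1/((n:ℝ)-1)) * s.pi1 (s.curv s.nabla s.xi U Y)) • Z
        + (ι (1/((n:ℝ)-1)) * s.pi1 (s.curv s.nabla s.xi Z Y)) • U)
    (Z U Y : V) :
    s.curv s.nabla Z U Y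
      = (ι (1/((n:ℝ)-1)) * (s.Ric e s.nabla s.xi Y * s.pi1 U)) • Z
        - (ι (1/((n:ℝ)-1)) * (s.Ric e s.nabla s.xi Y * s.pi1 Z)) • U
        + s.pi1 (s.curv s.nabla Z U Y) • s.xi := by
  have h := hstar Z U Y
  rw [starI s e hn hpar horth hspan hstar U Y, starI s e hn hpar horth hspan hstar Z Y] at h
  linear_combination (norm := module) h

end Aux10

section Aux11

variable {n : ℕ} {C V : Type*} [CommRing C] [Algebra ℝ C] [AddCommGroup V] [Module C V]
variable (s : GeomSetup n C V) (e : Fin n → V)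

local notation "ι" => algebraMap ℝ C

lemma g_xi_left (W : V) : s.g s.xi W = s.pi1 W := by rw [pi1, s.g_symm]

lemma natsub : ((n:C) - 1) = ι ((n:ℝ) - 1) := by rw [map_sub, map_one, map_natCast]

lemma cancel_nsub1 (hn : 2 < n) {x : C} (h : x * ((n:C) - 1) = 0) : x = 0 := by
  have hr : ((n:ℝ) - 1) ≠ 0 := by
    have h0 : (2:ℝ) < (n:ℝ) := by exact_mod_cast hn
    linarith
  refine mul_cancel'' hr (x := x) (y := 0) ?_
  rw [mul_comm, ← natsub, h, mul_zero]

lemma sum_M (horth : ∀ i j, s.g (e i) (e j) = if i = j then 1 else 0)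
    (hspan : ∀ v : V, v = ∑ i, s.g v (e i) • e i) :
    ∑ i, (s.g (e i) (e i) - s.pi1 (e i) * s.pi1 (e i)) = (n:C) - 1 := by
  rw [Finset.sum_sub_distrib, sum_diag s e horth, sum_pi_sq s e hspan]

/-- (C2). -/
lemma keyC2
    (hstarv : ∀ Z U Y : V, s.curv s.nabla Z U Y
      = (ι (1/((n:ℝ)-1)) * (s.Ric e s.nabla s.xi Y * s.pi1 U)) • Z
        - (ι (1/((n:ℝ)-1)) * (s.Ric e s.nabla s.xi Y * s.pi1 Z)) • U
        + s.pi1 (s.curv s.nabla Z U Y) • s.xi)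
    (Z U : V) (f : C) (W : V) :
    Kfun s Z U f • W
      = (ι (1/((n:ℝ)-1)) * ((∑ i, Kfun s (e i) s.xi f * s.g W (e i)) * s.pi1 U)) • Z
        - (ι (1/((n:ℝ)-1)) * ((∑ i, Kfun s (e i) s.xi f * s.g W (e i)) * s.pi1 Z)) • U
        + (Kfun s Z U f * s.pi1 W) • s.xi := by
  have h1 := hstarv Z U (f • W)
  simp only [curv_nabla_smul3 s Z U f W, Ric_nabla_smul3 s e s.xi f W,
    pi1_add, pi1_smul] at h1
  have h2 := hstarv Z U W
  linear_combination (norm := module) h1 - f • h2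

/-- (D1)/(C3). -/
lemma keyD1
    (hstarv : ∀ Z U Y : V, s.curv s.nabla Z U Y
      = (ι (1/((n:ℝ)-1)) * (s.Ric e s.nabla s.xi Y * s.pi1 U)) • Z
        - (ι (1/((n:ℝ)-1)) * (s.Ric e s.nabla s.xi Y * s.pi1 Z)) • U
        + s.pi1 (s.curv s.nabla Z U Y) • s.xi)
    (Z W W' : V) (f : C) :
    Kfun s Z s.xi f * (s.g W W' - s.pi1 W * s.pi1 W')
      = ι (1/((n:ℝ)-1)) * (∑ i, Kfun s (e i) s.xi f * s.g W (e i))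
          * (s.g Z W' - s.pi1 Z * s.pi1 W') := by
  have h := keyC2 s e hstarv Z s.xi f W
  have hg := congrArg (fun v => s.g v W') h
  simp only [g_sub_left, s.g_add_left, s.g_smul_left, g_xi_left, pi1_xi] at hg
  linear_combination hg

/-- (C5). -/
lemma keyC5
    (horth : ∀ i j, s.g (e i) (e j) = if i = j then 1 else 0)
    (hspan : ∀ v : V, v = ∑ i, s.g v (e i) • e i)
    (hstarv : ∀ Z U Y : V, s.curv s.nabla Z U Y
      = (ι (1/((n:ℝ)-1)) * (s.Ric e s.nabla s.xi Y * s.pi1 U)) • Z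
        - (ι (1/((n:ℝ)-1)) * (s.Ric e s.nabla s.xi Y * s.pi1 Z)) • U
        + s.pi1 (s.curv s.nabla Z U Y) • s.xi)
    (Z W W' : V) (f : C) :
    (∑ i, Kfun s (e i) s.xi f * s.g Z (e i)) * (s.g W W' - s.pi1 W * s.pi1 W')
      = ι (1/((n:ℝ)-1)) * (∑ i, Kfun s (e i) s.xi f * s.g W (e i))
          * (s.g Z W' - s.pi1 Z * s.pi1 W') := by
  have key : ∀ i : Fin n,
      (Kfun s (e i) s.xi f * s.g Z (e i)) * (s.g W W' - s.pi1 W * s.pi1 W')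
        = ι (1/((n:ℝ)-1)) * (∑ j, Kfun s (e j) s.xi f * s.g W (e j))
            * (s.g Z (e i) * (s.g (e i) W' - s.pi1 (e i) * s.pi1 W')) := by
    intro i
    have h := keyD1 s e hstarv (e i) W W' f
    linear_combination s.g Z (e i) * h
  have h1 : (∑ i, Kfun s (e i) s.xi f * s.g Z (e i)) * (s.g W W' - s.pi1 W * s.pi1 W')
      = ∑ i, (Kfun s (e i) s.xi f * s.g Z (e i)) * (s.g W W' - s.pi1 W * s.pi1 W') := by
    rw [Finset.sum_mul]
  have h2 : ∑ i, ι (1/((n:ℝ)-1)) * (∑ j, Kfun s (e j) s.xi f * s.g W (e j))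
      * (s.g Z (e i) * (s.g (e i) W' - s.pi1 (e i) * s.pi1 W'))
      = ι (1/((n:ℝ)-1)) * (∑ j, Kfun s (e j) s.xi f * s.g W (e j))
          * (s.g Z W' - s.pi1 Z * s.pi1 W') := by
    rw [← Finset.mul_sum]
    congr 1
    have h3 : ∑ i, s.g Z (e i) * (s.g (e i) W' - s.pi1 (e i) * s.pi1 W')
        = (∑ i, s.g Z (e i) * s.g (e i) W') - (∑ i, s.g Z (e i) * s.pi1 (e i)) * s.pi1 W' := by
      rw [Finset.sum_mul, ← Finset.sum_sub_distrib]
      exact Finset.sum_congr rfl fun i _ => by ring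
    have h4 : ∑ i, s.g Z (e i) * s.g (e i) W' = s.g Z W' := by
      rw [gsum s e hspan Z W']
      exact Finset.sum_congr rfl fun i _ => by
        rw [s.g_symm (e i) W']; ring
    have h5 : ∑ i, s.g Z (e i) * s.pi1 (e i) = s.pi1 Z := by
      rw [← sum_pi_g s e hspan Z]
      exact Finset.sum_congr rfl fun i _ => by ring
    rw [h3, h4, h5]
  calc (∑ i, Kfun s (e i) s.xi f * s.g Z (e i)) * (s.g W W' - s.pi1 W * s.pi1 W')
      = ∑ i, (Kfun s (e i) s.xi f * s.g Z (e i)) * (s.g W W' - s.pi1 W * s.pi1 W') := h1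
    _ = ∑ i, ι (1/((n:ℝ)-1)) * (∑ j, Kfun s (e j) s.xi f * s.g W (e j))
          * (s.g Z (e i) * (s.g (e i) W' - s.pi1 (e i) * s.pi1 W')) :=
        Finset.sum_congr rfl fun i _ => key i
    _ = _ := h2

/-- (C6): `E(f,Z) = K(Z,ξ)f`. -/
lemma keyC6 (hn : 2 < n)
    (horth : ∀ i j, s.g (e i) (e j) = if i = j then 1 else 0)
    (hspan : ∀ v : V, v = ∑ i, s.g v (e i) • e i)
    (hstarv : ∀ Z U Y : V, s.curv s.nabla Z U Y
      = (ι (1/((n:ℝ)-1)) * (s.Ric e s.nabla s.xi Y * s.pi1 U)) • Z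
        - (ι (1/((n:ℝ)-1)) * (s.Ric e s.nabla s.xi Y * s.pi1 Z)) • U
        + s.pi1 (s.curv s.nabla Z U Y) • s.xi)
    (Z : V) (f : C) :
    (∑ i, Kfun s (e i) s.xi f * s.g Z (e i)) = Kfun s Z s.xi f := by
  have hpoint : ∀ i : Fin n,
      (Kfun s Z s.xi f - ∑ j, Kfun s (e j) s.xi f * s.g Z (e j))
        * (s.g (e i) (e i) - s.pi1 (e i) * s.pi1 (e i)) = 0 := by
    intro i
    have hD := keyD1 s e hstarv Z (e i) (e i) f
    have hC := keyC5 s e horth hspan hstarv Z (e i) (e i) f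
    linear_combination hD - hC
  have hsum : (Kfun s Z s.xi f - ∑ j, Kfun s (e j) s.xi f * s.g Z (e j)) * ((n:C) - 1)
      = 0 := by
    rw [← sum_M s e horth hspan, Finset.mul_sum]
    exact Finset.sum_eq_zero fun i _ => hpoint i
  have := cancel_nsub1 hn hsum
  linear_combination -this

/-- (C8): `K(Z,ξ)f = 0`. -/
lemma keyC8 (hn : 2 < n)
    (horth : ∀ i j, s.g (e i) (e j) = if i = j then 1 else 0)
    (hspan : ∀ v : V, v = ∑ i, s.g v (e i) • e i)
    (hstarv : ∀ Z U Y : V, s.curv s.nabla Z U Y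
      = (ι (1/((n:ℝ)-1)) * (s.Ric e s.nabla s.xi Y * s.pi1 U)) • Z
        - (ι (1/((n:ℝ)-1)) * (s.Ric e s.nabla s.xi Y * s.pi1 Z)) • U
        + s.pi1 (s.curv s.nabla Z U Y) • s.xi)
    (Z : V) (f : C) : Kfun s Z s.xi f = 0 := by
  have hC7 : ∀ A B W' : V, Kfun s A s.xi f * (s.g B W' - s.pi1 B * s.pi1 W')
      = ι (1/((n:ℝ)-1)) * Kfun s B s.xi f * (s.g A W' - s.pi1 A * s.pi1 W') := by
    intro A B W'
    have h := keyD1 s e hstarv A B W' f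
    rw [keyC6 s e hn horth hspan hstarv B f] at h
    exact h
  have hk : ∀ W W' : V, Kfun s Z s.xi f * (s.g W W' - s.pi1 W * s.pi1 W')
      * (1 - (ι (1/((n:ℝ)-1)))^2) = 0 := by
    intro W W'
    have hA := hC7 Z W W'
    have hB := hC7 W Z W'
    linear_combination hA + ι (1/((n:ℝ)-1)) * hB
  have hsum : Kfun s Z s.xi f * ((n:C) - 1) * (1 - (ι (1/((n:ℝ)-1)))^2) = 0 := by
    have h1 : Kfun s Z s.xi f * ((n:C) - 1) * (1 - (ι (1/((n:ℝ)-1)))^2)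
        = ∑ i, Kfun s Z s.xi f * (s.g (e i) (e i) - s.pi1 (e i) * s.pi1 (e i))
            * (1 - (ι (1/((n:ℝ)-1)))^2) := by
      rw [← sum_M s e horth hspan]
      rw [Finset.mul_sum, Finset.sum_mul]
    rw [h1]
    exact Finset.sum_eq_zero fun i _ => hk (e i) (e i)
  -- convert the coefficient to `ι` of a nonzero real and cancel
  have hfact : ((n:C) - 1) * (1 - (ι (1/((n:ℝ)-1)))^2)
      = ι (((n:ℝ) - 1) * (1 - (1/((n:ℝ)-1))^2)) := by
    simp only [map_mul, map_sub, map_one, map_pow, map_natCast]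
  have hr : (((n:ℝ) - 1) * (1 - (1/((n:ℝ)-1))^2)) ≠ 0 := by
    have h0 : (2:ℝ) < (n:ℝ) := by exact_mod_cast hn
    have h1 : ((n:ℝ) - 1) ≠ 0 := by linarith
    have h2 : (1 - (1/((n:ℝ)-1))^2) ≠ 0 := by
      have h3 : (1:ℝ) < ((n:ℝ)-1)^2 := by nlinarith
      have h4 : (1/((n:ℝ)-1))^2 < 1 := by
        rw [div_pow, one_pow]
        rw [div_lt_one (by nlinarith)]
        exact h3
      linarith
    exact mul_ne_zero h1 h2
  refine mul_cancel'' hr (x := Kfun s Z s.xi f) (y := 0) ?_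
  rw [mul_comm, ← hfact, mul_zero]
  linear_combination hsum

/-- (C9): the curvature of `D` vanishes identically. -/
lemma keyC9 (hn : 2 < n)
    (horth : ∀ i j, s.g (e i) (e j) = if i = j then 1 else 0)
    (hspan : ∀ v : V, v = ∑ i, s.g v (e i) • e i)
    (hstarv : ∀ Z U Y : V, s.curv s.nabla Z U Y
      = (ι (1/((n:ℝ)-1)) * (s.Ric e s.nabla s.xi Y * s.pi1 U)) • Z
        - (ι (1/((n:ℝ)-1)) * (s.Ric e s.nabla s.xi Y * s.pi1 Z)) • U
        + s.pi1 (s.curv s.nabla Z U Y) • s.xi)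
    (Z U : V) (f : C) : Kfun s Z U f = 0 := by
  have hE : ∀ W : V, (∑ i, Kfun s (e i) s.xi f * s.g W (e i)) = 0 := by
    intro W
    exact Finset.sum_eq_zero fun i _ => by
      rw [keyC8 s e hn horth hspan hstarv (e i) f, zero_mul]
  have hscal : ∀ W W' : V, Kfun s Z U f * s.g W W'
      = Kfun s Z U f * (s.pi1 W * s.pi1 W') := by
    intro W W'
    have h := keyC2 s e hstarv Z U f W
    rw [hE W] at h
    have hg := congrArg (fun v => s.g v W') h
    simp only [g_sub_left, s.g_add_left, s.g_smul_left, g_xi_left] at hg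
    linear_combination hg
  have hsum : Kfun s Z U f * ((n:C) - 1) = 0 := by
    have h1 : Kfun s Z U f * ((n:C) - 1)
        = ∑ i, (Kfun s Z U f * s.g (e i) (e i)
            - Kfun s Z U f * (s.pi1 (e i) * s.pi1 (e i))) := by
      rw [← sum_M s e horth hspan, Finset.mul_sum]
      exact Finset.sum_congr rfl fun i _ => by ring
    rw [h1]
    exact Finset.sum_eq_zero fun i _ => by rw [hscal (e i) (e i), sub_self]
  exact cancel_nsub1 hn hsum

end Aux11

section Aux12

variable {n : ℕ} {C V : Type*} [CommRing C] [Algebra ℝ C] [AddCommGroup V] [Module C V]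
variable (s : GeomSetup n C V) (e : Fin n → V)

local notation "ι" => algebraMap ℝ C

lemma curv_nabla_add3 (Z U A B : V) :
    s.curv s.nabla Z U (A + B) = s.curv s.nabla Z U A + s.curv s.nabla Z U B := by
  simp only [curv, s.nabla_add_right]
  abel

lemma curv_nabla_zero3 (Z U : V) : s.curv s.nabla Z U 0 = 0 := by
  have := curv_nabla_add3 s Z U 0 0; simpa using this

lemma curv_nabla_sum3 {m : ℕ} (Z U : V) (F : Fin m → V) :
    s.curv s.nabla Z U (∑ i, F i) = ∑ i, s.curv s.nabla Z U (F i) := by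
  classical
  induction (Finset.univ : Finset (Fin m)) using Finset.induction_on with
  | empty => simp [curv_nabla_zero3]
  | insert a t h ih => simp [Finset.sum_insert h, curv_nabla_add3, ih]

lemma Ric_nabla_sum3 {m : ℕ} (U : V) (F : Fin m → V) :
    s.Ric e s.nabla U (∑ k, F k) = ∑ k, s.Ric e s.nabla U (F k) := by
  simp only [Ric, curv_nabla_sum3, g_sum_left]
  rw [Finset.sum_comm]

lemma cancel_n (hn : 2 < n) {x : C} (h : x * (n:C) = 0) : x = 0 := by
  have hr : ((n:ℝ)) ≠ 0 := by
    have h0 : (2:ℝ) < (n:ℝ) := by exact_mod_cast hn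
    linarith
  refine mul_cancel'' hr (x := x) (y := 0) ?_
  rw [mul_comm, map_natCast, h, mul_zero]

end Aux12

theorem stmt19 {n : ℕ} {C V : Type*} [CommRing C] [Algebra ℝ C]
    [AddCommGroup V] [Module C V] (s : GeomSetup n C V) (hn : 2 < n) (hinj : Function.Injective (algebraMap ℝ C)) (hpar : ∀ X : V, s.nabla X s.xi = 0) (e : Fin n → V)
    (horth : ∀ i j, s.g (e i) (e j) = if i = j then 1 else 0)
    (hspan : ∀ v : V, v = ∑ i, s.g v (e i) • e i)
    (hRP : ∀ X Y Z U W : V,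
      s.curv s.tnabla X Y
          (s.curv s.tnabla Z U W -
            algebraMap ℝ C (1 / ((n : ℝ) - 1)) •
              (s.Ric e s.tnabla U W • Z - s.Ric e s.tnabla Z W • U)) -
        (s.curv s.tnabla (s.curv s.tnabla X Y Z) U W -
          algebraMap ℝ C (1 / ((n : ℝ) - 1)) •
            (s.Ric e s.tnabla U W • s.curv s.tnabla X Y Z -
              s.Ric e s.tnabla (s.curv s.tnabla X Y Z) W • U)) -
        (s.curv s.tnabla Z (s.curv s.tnabla X Y U) W -
          algebraMap ℝ C (1 / ((n : ℝ) - 1)) •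
            (s.Ric e s.tnabla (s.curv s.tnabla X Y U) W • Z -
              s.Ric e s.tnabla Z W • s.curv s.tnabla X Y U)) -
        (s.curv s.tnabla Z U (s.curv s.tnabla X Y W) -
          algebraMap ℝ C (1 / ((n : ℝ) - 1)) •
            (s.Ric e s.tnabla U (s.curv s.tnabla X Y W) • Z -
              s.Ric e s.tnabla Z (s.curv s.tnabla X Y W) • U)) = 0) :
    ∀ Y Z : V, s.Ric e s.nabla Y Z = 0 := by
  intro Y₀ Z₀
  have hstarfun := star s e hn hpar horth hspan hRP
  have hstarv := starv s e hn hpar horth hspan hstarfun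
  -- the curvature of `D` vanishes
  have hK : ∀ Z U : V, ∀ f : C, Kfun s Z U f = 0 :=
    fun Z U f => keyC9 s e hn horth hspan hstarv Z U f
  -- hence `π(R(Z,U)W) = 0`
  have hpiR : ∀ Z U W : V, s.pi1 (s.curv s.nabla Z U W) = 0 := by
    intro Z U W
    rw [← Kfun_pi s hpar, hK]
  -- the Ricci tensor in terms of `σ(Y) := S(ξ,Y)`
  have hRicσ : ∀ U Y : V,
      s.Ric e s.nabla U Y = s.Ric e s.nabla s.xi Y * s.pi1 U := by
    intro U Y
    have h := starI s e hn hpar horth hspan hstarfun U Y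
    rw [hpiR] at h
    linear_combination -h
  -- skew-symmetry of the curvature in the last two slots
  have hskew : ∀ Z U A B : V,
      s.g (s.curv s.nabla Z U A) B + s.g A (s.curv s.nabla Z U B) = 0 := by
    intro Z U A B
    have h := Kfun_g s Z U A B
    rw [hK] at h
    linear_combination -h
  -- scalar form of `(★v)`
  have hgc : ∀ Z U A B : V, s.g (s.curv s.nabla Z U A) B
      = (algebraMap ℝ C) (1/((n:ℝ)-1)) * (s.Ric e s.nabla s.xi A * s.pi1 U) * s.g Z B
        - (algebraMap ℝ C) (1/((n:ℝ)-1)) * (s.Ric e s.nabla s.xi A * s.pi1 Z) * s.g U B := by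
    intro Z U A B
    have h := congrArg (fun v => s.g v B) (hstarv Z U A)
    simp only [g_sub_left, s.g_add_left, s.g_smul_left] at h
    rw [hpiR Z U A] at h
    rw [g_xi_left] at h
    linear_combination h
  -- the identity (9d), with the factor `c` cancelled
  have h9d : ∀ Z U A B : V,
      s.Ric e s.nabla s.xi A * (s.pi1 U * s.g Z B - s.pi1 Z * s.g U B)
        + s.Ric e s.nabla s.xi B * (s.pi1 U * s.g Z A - s.pi1 Z * s.g U A) = 0 := by
    intro Z U A B
    have h1 := hskew Z U A B
    rw [s.g_symm A (s.curv s.nabla Z U B)] at h1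
    rw [hgc Z U A B, hgc Z U B A] at h1
    have hrc : (1/((n:ℝ)-1)) ≠ 0 := by
      have h0 : (2:ℝ) < (n:ℝ) := by exact_mod_cast hn
      have : ((n:ℝ) - 1) ≠ 0 := by linarith
      exact one_div_ne_zero this
    refine mul_cancel'' hrc (y := 0) ?_
    rw [mul_zero]
    linear_combination h1
  -- the identity (9e)  (set `U := ξ` in (9d))
  have h9e : ∀ Z A B : V,
      s.Ric e s.nabla s.xi A * (s.g Z B - s.pi1 Z * s.pi1 B)
        + s.Ric e s.nabla s.xi B * (s.g Z A - s.pi1 Z * s.pi1 A) = 0 := by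
    intro Z A B
    have h := h9d Z s.xi A B
    rw [pi1_xi, g_xi_left, g_xi_left] at h
    linear_combination h
  -- second-slot expansion of `σ`
  have hνsum : ∀ A : V, s.Ric e s.nabla s.xi A
      = ∑ i, s.g A (e i) * s.Ric e s.nabla s.xi (e i) := by
    intro A
    conv_lhs => rw [hspan A]
    rw [Ric_nabla_sum3]
    refine Finset.sum_congr rfl fun i _ => ?_
    rw [Ric_nabla_smul3 s e s.xi (s.g A (e i)) (e i)]
    have hz : ∑ j, Kfun s (e j) s.xi (s.g A (e i)) * s.g (e i) (e j) = 0 :=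
      Finset.sum_eq_zero fun j _ => by rw [hK, zero_mul]
    rw [hz, add_zero]
  -- `∑ σ(eᵢ) π(eᵢ) = 0`
  have hσ1 : ∑ i, s.Ric e s.nabla s.xi (e i) * s.pi1 (e i) = 0 := by
    have h := hνsum s.xi
    rw [Ric_nabla_xi s e hpar] at h
    rw [← neg_eq_zero]
    rw [show -(∑ i, s.Ric e s.nabla s.xi (e i) * s.pi1 (e i))
      = -(∑ i, s.g s.xi (e i) * s.Ric e s.nabla s.xi (e i)) from by
        rw [neg_inj]
        exact Finset.sum_congr rfl fun i _ => by rw [g_xi_left]; ring]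
    rw [← h, neg_zero]
  -- `∑ σ(eᵢ) g(eᵢ, Y) = σ(Y)`
  have hσ2 : ∀ A : V, ∑ i, s.Ric e s.nabla s.xi (e i) * s.g (e i) A
      = s.Ric e s.nabla s.xi A := by
    intro A
    rw [hνsum A]
    exact Finset.sum_congr rfl fun i _ => by rw [s.g_symm (e i) A]; ring
  -- conclude `σ = 0`
  have hσ0 : ∀ A : V, s.Ric e s.nabla s.xi A = 0 := by
    intro A
    have hB : ∀ i : Fin n, s.Ric e s.nabla s.xi A
          * (s.g (e i) (e i) - s.pi1 (e i) * s.pi1 (e i))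
        = -(s.Ric e s.nabla s.xi (e i) * s.g (e i) A)
          + (s.Ric e s.nabla s.xi (e i) * s.pi1 (e i)) * s.pi1 A := by
      intro i
      have h := h9e (e i) A (e i)
      linear_combination h
    have hA : s.Ric e s.nabla s.xi A * ((n:C) - 1)
        = ∑ i, s.Ric e s.nabla s.xi A
            * (s.g (e i) (e i) - s.pi1 (e i) * s.pi1 (e i)) := by
      rw [← Finset.mul_sum, sum_M s e horth hspan]
    have hC : s.Ric e s.nabla s.xi A * ((n:C) - 1)
        = ∑ i, (-(s.Ric e s.nabla s.xi (e i) * s.g (e i) A)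
            + (s.Ric e s.nabla s.xi (e i) * s.pi1 (e i)) * s.pi1 A) := by
      rw [hA]
      exact Finset.sum_congr rfl fun i _ => hB i
    rw [Finset.sum_add_distrib, Finset.sum_neg_distrib] at hC
    have hE : ∑ i, s.Ric e s.nabla s.xi (e i) * s.pi1 (e i) * s.pi1 A = 0 := by
      rw [← Finset.sum_mul, hσ1, zero_mul]
    rw [hσ2 A, hE] at hC
    refine cancel_n hn (x := s.Ric e s.nabla s.xi A) ?_
    linear_combination hC
  rw [hRicσ Y₀ Z₀, hσ0 Z₀, zero_mul]
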